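/- arXiv:1605.01190 — 2 statements merged into one kernel-verified Lean document; each statement's English description precedes it below -/
import Mathlib

section
/- If v₁ > 0, v₃ > 0 and v₂² < v₁ v₃, then det Σ > 0. -/
/-!
Writing `g = f ^ (-1/q)` and `u = g (X - Y f)`, one has `m^{i,j} = ∫ f^i g^j`, so the quadratic
form of `Σ` at `(X, Y, Z)` is `v₁ ∫ u² + 2 v₂ Z ∫ u + v₃ Z²`. Since `(∫ u)² ≤ ∫ u²` on the unit
interval, `v₁` times this form is at least `(v₁ ∫ u + v₂ Z)² + (v₁ v₃ - v₂²) Z²`, which is positive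
when `Z ≠ 0`; when `Z = 0` the form is `v₁ ∫ u²`, positive because `f` is not constant. Hence `Σ`
is positive definite.
-/

open MeasureTheory Set Matrix

lemma sq_integral_le_integral_sq {Ω : Type*} [MeasurableSpace Ω] {μ : Measure Ω}
    [IsProbabilityMeasure μ] {u : Ω → ℝ} (hu : Integrable u μ)
    (hu2 : Integrable (fun x => u x ^ 2) μ) :
    (∫ x, u x ∂μ) ^ 2 ≤ ∫ x, u x ^ 2 ∂μ := by
  have hvar := ProbabilityTheory.variance_eq_sub ((memLp_two_iff_integrable_sq hu.1).2 hu2)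
  have := ProbabilityTheory.variance_nonneg u μ
  simp only [Pi.pow_apply] at hvar
  linarith

lemma sq_intervalIntegral_le_intervalIntegral_sq {u : ℝ → ℝ}
    (hu : ContinuousOn u (Icc 0 1)) :
    (∫ t in (0 : ℝ)..1, u t) ^ 2 ≤ ∫ t in (0 : ℝ)..1, u t ^ 2 := by
  have : IsProbabilityMeasure (volume.restrict (Ioc (0 : ℝ) 1)) := ⟨by simp⟩
  simp only [intervalIntegral.integral_of_le zero_le_one]
  exact sq_integral_le_integral_sq
    (hu.integrableOn_Icc.mono_set Ioc_subset_Icc_self)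
    ((hu.pow 2).integrableOn_Icc.mono_set Ioc_subset_Icc_self)

lemma sub_mul_ne_zero_or_of_ne {X Y a b : ℝ} (hab : a ≠ b) (hXY : X ≠ 0 ∨ Y ≠ 0) :
    X - Y * a ≠ 0 ∨ X - Y * b ≠ 0 := by
  by_contra! h
  have hY : Y = 0 := by
    have : Y * (a - b) = 0 := by linear_combination h.2 - h.1
    simpa [sub_ne_zero.2 hab] using this
  simp_all

lemma intervalIntegral_sq_mul_sub_mul_pos {a b X Y : ℝ} {f g : ℝ → ℝ} (hab : a < b)
    (hf : ContinuousOn f (Icc a b)) (hg : ContinuousOn g (Icc a b))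
    (hg0 : ∀ t ∈ Icc a b, g t ≠ 0)
    (hfnc : ∃ s ∈ Icc a b, ∃ t ∈ Icc a b, f s ≠ f t) (hXY : X ≠ 0 ∨ Y ≠ 0) :
    0 < ∫ t in a..b, (g t * (X - Y * f t)) ^ 2 := by
  obtain ⟨s, hs, t, ht, hst⟩ := hfnc
  refine intervalIntegral.integral_pos hab
    ((hg.mul (continuousOn_const.sub (continuousOn_const.mul hf))).pow 2)
    (fun _ _ => sq_nonneg _) ?_
  rcases sub_mul_ne_zero_or_of_ne hst hXY with h | h
  · exact ⟨s, hs, sq_pos_of_ne_zero (mul_ne_zero (hg0 s hs) h)⟩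
  · exact ⟨t, ht, sq_pos_of_ne_zero (mul_ne_zero (hg0 t ht) h)⟩

lemma quadratic_pos_of_sq_le {v₁ v₂ v₃ s I Z : ℝ} (hv1 : 0 < v₁) (hv : v₂ ^ 2 < v₁ * v₃)
    (hsI : s ^ 2 ≤ I) (hIZ : 0 < I ∨ Z ≠ 0) :
    0 < v₁ * I + 2 * v₂ * Z * s + v₃ * Z ^ 2 := by
  by_cases hZ : Z = 0
  · simpa [hZ] using mul_pos hv1 (hIZ.resolve_right (not_not.2 hZ))
  · have key : v₁ * (v₁ * I + 2 * v₂ * Z * s + v₃ * Z ^ 2)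
        = v₁ ^ 2 * (I - s ^ 2) + (v₁ * s + v₂ * Z) ^ 2 + (v₁ * v₃ - v₂ ^ 2) * Z ^ 2 := by ring
    refine pos_of_mul_pos_right (key ▸ ?_) hv1.le
    have := mul_pos (sub_pos.2 hv) (sq_pos_of_ne_zero hZ)
    have := sub_nonneg.2 hsI
    positivity

noncomputable def rpowMoment (f : ℝ → ℝ) (q : ℝ) (i j : ℕ) : ℝ :=
  ∫ t in (0 : ℝ)..1, f t ^ ((i : ℝ) - (j : ℝ) / q)

lemma rpow_natCast_sub_div_eq {y : ℝ} (hy : 0 < y) (q : ℝ) (i j : ℕ) :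
    y ^ ((i : ℝ) - (j : ℝ) / q) = y ^ i * (y ^ (-q⁻¹)) ^ j := by
  rw [← Real.rpow_natCast y i, ← Real.rpow_natCast (y ^ (-q⁻¹)) j,
    ← Real.rpow_mul hy.le, ← Real.rpow_add hy]
  ring_nf

section rpowMoment

variable {f : ℝ → ℝ} {q : ℝ}

lemma rpowMoment_eq_integral_pow_mul_pow (hfpos : ∀ t ∈ Icc (0 : ℝ) 1, 0 < f t) (i j : ℕ) :
    rpowMoment f q i j = ∫ t in (0 : ℝ)..1, f t ^ i * (f t ^ (-q⁻¹)) ^ j :=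
  intervalIntegral.integral_congr fun t ht =>
    rpow_natCast_sub_div_eq (hfpos t (by rwa [uIcc_of_le zero_le_one] at ht)) q i j

lemma intervalIntegrable_pow_mul_pow (hf : ContinuousOn f (Icc 0 1))
    (hfpos : ∀ t ∈ Icc (0 : ℝ) 1, 0 < f t) (i j : ℕ) :
    IntervalIntegrable (fun t => f t ^ i * (f t ^ (-q⁻¹)) ^ j) volume 0 1 :=
  ((hf.pow i).mul ((hf.rpow_const fun t ht => Or.inl (hfpos t ht).ne').pow j))
    |>.intervalIntegrable_of_Icc zero_le_one

lemma rpowMoment_linear_combination_eq_integral (hf : ContinuousOn f (Icc 0 1))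
    (hfpos : ∀ t ∈ Icc (0 : ℝ) 1, 0 < f t) (X Y : ℝ) :
    X * rpowMoment f q 0 1 - Y * rpowMoment f q 1 1
      = ∫ t in (0 : ℝ)..1, f t ^ (-q⁻¹) * (X - Y * f t) := by
  have hint := intervalIntegrable_pow_mul_pow (q := q) hf hfpos
  rw [rpowMoment_eq_integral_pow_mul_pow hfpos, rpowMoment_eq_integral_pow_mul_pow hfpos,
    ← intervalIntegral.integral_const_mul, ← intervalIntegral.integral_const_mul,
    ← intervalIntegral.integral_sub ((hint 0 1).const_mul X) ((hint 1 1).const_mul Y)]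
  exact intervalIntegral.integral_congr fun t _ => by ring

lemma rpowMoment_quadratic_combination_eq_integral_sq (hf : ContinuousOn f (Icc 0 1))
    (hfpos : ∀ t ∈ Icc (0 : ℝ) 1, 0 < f t) (X Y : ℝ) :
    X ^ 2 * rpowMoment f q 0 2 - 2 * X * Y * rpowMoment f q 1 2 + Y ^ 2 * rpowMoment f q 2 2
      = ∫ t in (0 : ℝ)..1, (f t ^ (-q⁻¹) * (X - Y * f t)) ^ 2 := by
  have hint := intervalIntegrable_pow_mul_pow (q := q) hf hfpos
  rw [rpowMoment_eq_integral_pow_mul_pow hfpos, rpowMoment_eq_integral_pow_mul_pow hfpos,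
    rpowMoment_eq_integral_pow_mul_pow hfpos, ← intervalIntegral.integral_const_mul,
    ← intervalIntegral.integral_const_mul, ← intervalIntegral.integral_const_mul,
    ← intervalIntegral.integral_sub ((hint 0 2).const_mul _) ((hint 1 2).const_mul _),
    ← intervalIntegral.integral_add
      (((hint 0 2).const_mul _).sub ((hint 1 2).const_mul _)) ((hint 2 2).const_mul _)]
  exact intervalIntegral.integral_congr fun t _ => by ring

end rpowMoment

def sigmaMatrix (v₁ v₂ v₃ : ℝ) (m : ℕ → ℕ → ℝ) : Matrix (Fin 3) (Fin 3) ℝ :=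
  !![v₁ * m 0 2, -(v₁ * m 1 2), v₂ * m 0 1;
     -(v₁ * m 1 2), v₁ * m 2 2, -(v₂ * m 1 1);
     v₂ * m 0 1, -(v₂ * m 1 1), v₃]

section sigmaMatrix

variable (v₁ v₂ v₃ : ℝ) (m : ℕ → ℕ → ℝ)

lemma sigmaMatrix_isHermitian : (sigmaMatrix v₁ v₂ v₃ m).IsHermitian := by
  ext i j
  fin_cases i <;> fin_cases j <;> simp [sigmaMatrix]

lemma dotProduct_sigmaMatrix_mulVec (x : Fin 3 → ℝ) :
    star x ⬝ᵥ (sigmaMatrix v₁ v₂ v₃ m *ᵥ x)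
      = v₁ * (x 0 ^ 2 * m 0 2 - 2 * x 0 * x 1 * m 1 2 + x 1 ^ 2 * m 2 2)
        + 2 * v₂ * x 2 * (x 0 * m 0 1 - x 1 * m 1 1) + v₃ * x 2 ^ 2 := by
  simp only [dotProduct, Pi.star_apply, star_trivial, mulVec, sigmaMatrix, of_apply, cons_val',
    cons_val_fin_one, Fin.sum_univ_three, cons_val_zero, cons_val_one, cons_val, neg_mul]
  ring

end sigmaMatrix

lemma sigmaMatrix_rpowMoment_posDef {f : ℝ → ℝ} {q v₁ v₂ v₃ : ℝ}
    (hf : ContinuousOn f (Icc 0 1))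
    (hfpos : ∀ t ∈ Icc (0 : ℝ) 1, 0 < f t)
    (hfnc : ∃ s ∈ Icc (0 : ℝ) 1, ∃ t ∈ Icc (0 : ℝ) 1, f s ≠ f t)
    (hv1 : 0 < v₁) (hv : v₂ ^ 2 < v₁ * v₃) :
    (sigmaMatrix v₁ v₂ v₃ (rpowMoment f q)).PosDef := by
  refine posDef_iff_dotProduct_mulVec.2 ⟨sigmaMatrix_isHermitian .., fun x hx => ?_⟩
  have hg : ContinuousOn (fun t => f t ^ (-q⁻¹)) (Icc 0 1) :=
    hf.rpow_const fun t ht => Or.inl (hfpos t ht).ne'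
  rw [dotProduct_sigmaMatrix_mulVec, rpowMoment_quadratic_combination_eq_integral_sq hf hfpos,
    rpowMoment_linear_combination_eq_integral hf hfpos]
  refine quadratic_pos_of_sq_le hv1 hv (sq_intervalIntegral_le_intervalIntegral_sq
    (hg.mul (continuousOn_const.sub (continuousOn_const.mul hf)))) ?_
  rcases eq_or_ne (x 2) 0 with hZ | hZ
  · refine Or.inl (intervalIntegral_sq_mul_sub_mul_pos zero_lt_one hf hg
      (fun t ht => (Real.rpow_pos_of_pos (hfpos t ht) _).ne') hfnc ?_)
    by_contra! hXY
    exact hx (by ext i; fin_cases i <;> simp [hXY.1, hXY.2, hZ])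
  · exact Or.inr hZ

theorem stmt_8_general (q : ℝ)
    (f : ℝ → ℝ) (hf : ContinuousOn f (Set.Icc 0 1))
    (hfpos : ∀ t ∈ Set.Icc (0:ℝ) 1, 0 < f t)
    (hfnc : ∃ s ∈ Set.Icc (0:ℝ) 1, ∃ t ∈ Set.Icc (0:ℝ) 1, f s ≠ f t)
    (m : ℕ → ℕ → ℝ)
    (hm : ∀ i j : ℕ, m i j = ∫ t in (0:ℝ)..1, f t ^ ((i : ℝ) - (j : ℝ) / q))
    (v₁ v₂ v₃ : ℝ) (hv1 : 0 < v₁) (hv : v₂ ^ 2 < v₁ * v₃)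
    (S : Matrix (Fin 3) (Fin 3) ℝ)
    (hS : S = !![v₁ * m 0 2, -(v₁ * m 1 2), v₂ * m 0 1;
                 -(v₁ * m 1 2), v₁ * m 2 2, -(v₂ * m 1 1);
                 v₂ * m 0 1, -(v₂ * m 1 1), v₃]) :
    0 < S.det := by
  obtain rfl : m = rpowMoment f q := funext₂ hm
  exact hS ▸ (sigmaMatrix_rpowMoment_posDef hf hfpos hfnc hv1 hv).det_pos

/-- If `v₁ > 0`, `v₃ > 0` and `v₂² < v₁ v₃`, then `det S > 0`. -/
theorem stmt_8 (q : ℝ) (hq : 0 < q)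
    (f : ℝ → ℝ) (hf : ContinuousOn f (Set.Icc 0 1))
    (hfpos : ∀ t ∈ Set.Icc (0:ℝ) 1, 0 < f t)
    (hfnc : ∃ s ∈ Set.Icc (0:ℝ) 1, ∃ t ∈ Set.Icc (0:ℝ) 1, f s ≠ f t)
    (m : ℕ → ℕ → ℝ)
    (hm : ∀ i j : ℕ, m i j = ∫ t in (0:ℝ)..1, f t ^ ((i : ℝ) - (j : ℝ) / q))
    (v₁ v₂ v₃ : ℝ) (hv1 : 0 < v₁) (hv3 : 0 < v₃) (hv : v₂ ^ 2 < v₁ * v₃)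
    (S : Matrix (Fin 3) (Fin 3) ℝ)
    (hS : S = !![v₁ * m 0 2, -(v₁ * m 1 2), v₂ * m 0 1;
                 -(v₁ * m 1 2), v₁ * m 2 2, -(v₂ * m 1 1);
                 v₂ * m 0 1, -(v₂ * m 1 1), v₃]) :
    0 < S.det :=
  stmt_8_general q f hf hfpos hfnc m hm v₁ v₂ v₃ hv1 hv S hS
end

section
/- For every (x₁, x₂, x₃) ∈ ℝ³, the quadratic form of Σ satisfies the identity (x₁, x₂, x₃) Σ (x₁, x₂, x₃)ᵀ = ∫₀¹ ∫_ℝ [ (x₁ f(t)^{−1/q} − x₂ f(t)^{1−1/q}) p'(u) + x₃ (u p'(u) + p(u)) ]² / p(u) du dt. In particular the quadratic form of Σ is nonnegative. -/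
open MeasureTheory Set Matrix

/-- Quadratic-form identity for `Σ`: for every `(x₁,x₂,x₃) ∈ ℝ³`,
`(x₁,x₂,x₃) Σ (x₁,x₂,x₃)ᵀ
  = ∫₀¹ ∫_ℝ [(x₁ f(t)^{−1/q} − x₂ f(t)^{1−1/q}) p'(u) + x₃ (u p'(u) + p(u))]²/p(u) du dt`,
and in particular the quadratic form is nonnegative. -/
theorem stmt_9
    (p : ℝ → ℝ) (hp : ContDiff ℝ 1 p) (hppos : ∀ x, 0 < p x)
    (hmass : ∫ x, p x = 1)
    (hp'0 : ∫ x, deriv p x = 0)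
    (hxp' : ∫ x, x * deriv p x = -1)
    (hint1 : Integrable (fun x => (deriv p x) ^ 2 / p x))
    (hint2 : Integrable (fun x => x * (deriv p x) ^ 2 / p x))
    (hint3 : Integrable (fun x => x ^ 2 * (deriv p x) ^ 2 / p x))
    (hint4 : Integrable (deriv p))
    (hint5 : Integrable (fun x => x * deriv p x))
    (q : ℝ) (hq : 0 < q)
    (f : ℝ → ℝ) (hf : ContinuousOn f (Set.Icc 0 1))
    (hfpos : ∀ t ∈ Set.Icc (0:ℝ) 1, 0 < f t)
    (v₁ v₂ v₃ : ℝ)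
    (hv1 : v₁ = ∫ x, (deriv p x) ^ 2 / p x)
    (hv2 : v₂ = ∫ x, x * (deriv p x) ^ 2 / p x)
    (hv3 : v₃ = (∫ x, x ^ 2 * (deriv p x) ^ 2 / p x) - 1)
    (m : ℕ → ℕ → ℝ)
    (hm : ∀ i j : ℕ, m i j = ∫ t in (0:ℝ)..1, f t ^ ((i : ℝ) - (j : ℝ) / q))
    (S : Matrix (Fin 3) (Fin 3) ℝ)
    (hS : S = !![v₁ * m 0 2, -(v₁ * m 1 2), v₂ * m 0 1;
                 -(v₁ * m 1 2), v₁ * m 2 2, -(v₂ * m 1 1);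
                 v₂ * m 0 1, -(v₂ * m 1 1), v₃]) :
    ∀ x₁ x₂ x₃ : ℝ,
      (![x₁, x₂, x₃] ⬝ᵥ S.mulVec ![x₁, x₂, x₃]
          = ∫ t in (0:ℝ)..1, ∫ u : ℝ,
              ((x₁ * f t ^ (-(1 / q)) - x₂ * f t ^ ((1:ℝ) - 1 / q)) * deriv p u
                  + x₃ * (u * deriv p u + p u)) ^ 2 / p u)
        ∧ 0 ≤ ![x₁, x₂, x₃] ⬝ᵥ S.mulVec ![x₁, x₂, x₃] := by
  intro x₁ x₂ x₃
  -- p is integrable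
  have hpInt : Integrable p := by
    by_contra h
    rw [integral_undef h] at hmass
    norm_num at hmass
  -- inner integral computation
  have inner : ∀ a : ℝ, (∫ u : ℝ,
      (a * deriv p u + x₃ * (u * deriv p u + p u)) ^ 2 / p u)
      = a ^ 2 * v₁ + 2 * a * x₃ * v₂ + x₃ ^ 2 * v₃ := by
    intro a
    have hrw : (fun u : ℝ => (a * deriv p u + x₃ * (u * deriv p u + p u)) ^ 2 / p u)
        = fun u : ℝ => a ^ 2 * ((deriv p u) ^ 2 / p u)
          + ((2 * a * x₃) * (u * (deriv p u) ^ 2 / p u)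
          + ((2 * a * x₃) * deriv p u
          + (x₃ ^ 2 * (u ^ 2 * (deriv p u) ^ 2 / p u)
          + ((2 * x₃ ^ 2) * (u * deriv p u) + x₃ ^ 2 * p u)))) := by
      funext u
      have h := (hppos u).ne'
      field_simp
      ring
    have I1 : Integrable (fun u : ℝ => a ^ 2 * ((deriv p u) ^ 2 / p u)) := hint1.const_mul _
    have I2 : Integrable (fun u : ℝ => (2 * a * x₃) * (u * (deriv p u) ^ 2 / p u)) :=
      hint2.const_mul _
    have I3 : Integrable (fun u : ℝ => (2 * a * x₃) * deriv p u) := hint4.const_mul _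
    have I4 : Integrable (fun u : ℝ => x₃ ^ 2 * (u ^ 2 * (deriv p u) ^ 2 / p u)) :=
      hint3.const_mul _
    have I5 : Integrable (fun u : ℝ => (2 * x₃ ^ 2) * (u * deriv p u)) := hint5.const_mul _
    have I6 : Integrable (fun u : ℝ => x₃ ^ 2 * p u) := hpInt.const_mul _
    have I56 : Integrable (fun u : ℝ => (2 * x₃ ^ 2) * (u * deriv p u) + x₃ ^ 2 * p u) :=
      I5.add I6
    have I456 : Integrable (fun u : ℝ => x₃ ^ 2 * (u ^ 2 * (deriv p u) ^ 2 / p u)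
        + ((2 * x₃ ^ 2) * (u * deriv p u) + x₃ ^ 2 * p u)) := I4.add I56
    have I3456 : Integrable (fun u : ℝ => (2 * a * x₃) * deriv p u
        + (x₃ ^ 2 * (u ^ 2 * (deriv p u) ^ 2 / p u)
        + ((2 * x₃ ^ 2) * (u * deriv p u) + x₃ ^ 2 * p u))) := I3.add I456
    have I23456 : Integrable (fun u : ℝ => (2 * a * x₃) * (u * (deriv p u) ^ 2 / p u)
        + ((2 * a * x₃) * deriv p u
        + (x₃ ^ 2 * (u ^ 2 * (deriv p u) ^ 2 / p u)
        + ((2 * x₃ ^ 2) * (u * deriv p u) + x₃ ^ 2 * p u)))) := I2.add I3456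
    rw [hrw]
    rw [integral_add I1 I23456, integral_add I2 I3456, integral_add I3 I456,
      integral_add I4 I56, integral_add I5 I6]
    simp only [integral_const_mul]
    rw [hp'0, hxp', hmass, hv1, hv2, hv3]
    ring
  -- interval integrability of rpow of f
  have hci : ∀ r : ℝ, IntervalIntegrable (fun t => f t ^ r) volume 0 1 := by
    intro r
    apply ContinuousOn.intervalIntegrable
    rw [Set.uIcc_of_le (zero_le_one)]
    exact hf.rpow_const (fun t ht => Or.inl (hfpos t ht).ne')
  -- values of m
  have hm02 : m 0 2 = ∫ t in (0:ℝ)..1, f t ^ (-(2 / q)) := by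
    rw [hm]; norm_num
  have hm12 : m 1 2 = ∫ t in (0:ℝ)..1, f t ^ ((1:ℝ) - 2 / q) := by
    rw [hm]; norm_num
  have hm22 : m 2 2 = ∫ t in (0:ℝ)..1, f t ^ ((2:ℝ) - 2 / q) := by
    rw [hm]; norm_num
  have hm01 : m 0 1 = ∫ t in (0:ℝ)..1, f t ^ (-(1 / q)) := by
    rw [hm]; norm_num
  have hm11 : m 1 1 = ∫ t in (0:ℝ)..1, f t ^ ((1:ℝ) - 1 / q) := by
    rw [hm]; norm_num
  -- quadratic form expansion
  have hquad : ![x₁, x₂, x₃] ⬝ᵥ S.mulVec ![x₁, x₂, x₃]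
      = v₁ * x₁ ^ 2 * m 0 2 + (-(2 * v₁ * x₁ * x₂)) * m 1 2 + v₁ * x₂ ^ 2 * m 2 2
        + (2 * v₂ * x₁ * x₃) * m 0 1 + (-(2 * v₂ * x₂ * x₃)) * m 1 1 + v₃ * x₃ ^ 2 := by
    subst hS
    simp [Matrix.mulVec, dotProduct, Fin.sum_univ_three]
    ring
  -- RHS computation
  have hrhs : (∫ t in (0:ℝ)..1, ∫ u : ℝ,
      ((x₁ * f t ^ (-(1 / q)) - x₂ * f t ^ ((1:ℝ) - 1 / q)) * deriv p u
        + x₃ * (u * deriv p u + p u)) ^ 2 / p u)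
      = ∫ t in (0:ℝ)..1,
          ((v₁ * x₁ ^ 2) * f t ^ (-(2 / q))
            + ((-(2 * v₁ * x₁ * x₂)) * f t ^ ((1:ℝ) - 2 / q)
            + ((v₁ * x₂ ^ 2) * f t ^ ((2:ℝ) - 2 / q)
            + ((2 * v₂ * x₁ * x₃) * f t ^ (-(1 / q))
            + ((-(2 * v₂ * x₂ * x₃)) * f t ^ ((1:ℝ) - 1 / q) + v₃ * x₃ ^ 2))))) := by
    apply intervalIntegral.integral_congr
    intro t ht
    rw [Set.uIcc_of_le (zero_le_one : (0:ℝ) ≤ 1)] at ht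
    have hft : 0 < f t := hfpos t ht
    simp only []
    rw [inner (x₁ * f t ^ (-(1 / q)) - x₂ * f t ^ ((1:ℝ) - 1 / q))]
    have e1 : f t ^ (-(2 / q)) = f t ^ (-(1 / q)) * f t ^ (-(1 / q)) := by
      rw [show -(2 / q) = -(1 / q) + -(1 / q) by ring, Real.rpow_add hft]
    have e2 : f t ^ ((1:ℝ) - 2 / q) = f t ^ (-(1 / q)) * f t ^ ((1:ℝ) - 1 / q) := by
      rw [show (1:ℝ) - 2 / q = -(1 / q) + ((1:ℝ) - 1 / q) by ring, Real.rpow_add hft]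
    have e3 : f t ^ ((2:ℝ) - 2 / q) = f t ^ ((1:ℝ) - 1 / q) * f t ^ ((1:ℝ) - 1 / q) := by
      rw [show (2:ℝ) - 2 / q = ((1:ℝ) - 1 / q) + ((1:ℝ) - 1 / q) by ring, Real.rpow_add hft]
    rw [e1, e2, e3]
    ring
  -- split the outer integral
  have hsplit : (∫ t in (0:ℝ)..1,
          ((v₁ * x₁ ^ 2) * f t ^ (-(2 / q))
            + ((-(2 * v₁ * x₁ * x₂)) * f t ^ ((1:ℝ) - 2 / q)
            + ((v₁ * x₂ ^ 2) * f t ^ ((2:ℝ) - 2 / q)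
            + ((2 * v₂ * x₁ * x₃) * f t ^ (-(1 / q))
            + ((-(2 * v₂ * x₂ * x₃)) * f t ^ ((1:ℝ) - 1 / q) + v₃ * x₃ ^ 2))))))
      = (v₁ * x₁ ^ 2) * (∫ t in (0:ℝ)..1, f t ^ (-(2 / q)))
        + ((-(2 * v₁ * x₁ * x₂)) * (∫ t in (0:ℝ)..1, f t ^ ((1:ℝ) - 2 / q))
        + ((v₁ * x₂ ^ 2) * (∫ t in (0:ℝ)..1, f t ^ ((2:ℝ) - 2 / q))
        + ((2 * v₂ * x₁ * x₃) * (∫ t in (0:ℝ)..1, f t ^ (-(1 / q)))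
        + ((-(2 * v₂ * x₂ * x₃)) * (∫ t in (0:ℝ)..1, f t ^ ((1:ℝ) - 1 / q))
          + v₃ * x₃ ^ 2 * (1 - 0))))) := by
    rw [intervalIntegral.integral_add ((hci _).const_mul _)
      (((hci _).const_mul _).add (((hci _).const_mul _).add
        (((hci _).const_mul _).add (((hci _).const_mul _).add intervalIntegrable_const)))),
      intervalIntegral.integral_add ((hci _).const_mul _)
      (((hci _).const_mul _).add (((hci _).const_mul _).add
        (((hci _).const_mul _).add intervalIntegrable_const))),
      intervalIntegral.integral_add ((hci _).const_mul _)
      (((hci _).const_mul _).add (((hci _).const_mul _).add intervalIntegrable_const)),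
      intervalIntegral.integral_add ((hci _).const_mul _)
      (((hci _).const_mul _).add intervalIntegrable_const),
      intervalIntegral.integral_add ((hci _).const_mul _) intervalIntegrable_const]
    simp only [intervalIntegral.integral_const_mul, intervalIntegral.integral_const,
      smul_eq_mul]
    ring
  have heq : ![x₁, x₂, x₃] ⬝ᵥ S.mulVec ![x₁, x₂, x₃]
      = ∫ t in (0:ℝ)..1, ∫ u : ℝ,
          ((x₁ * f t ^ (-(1 / q)) - x₂ * f t ^ ((1:ℝ) - 1 / q)) * deriv p u
            + x₃ * (u * deriv p u + p u)) ^ 2 / p u := by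
    rw [hrhs, hsplit, hquad, hm02, hm12, hm22, hm01, hm11]
    ring
  refine ⟨heq, ?_⟩
  rw [heq]
  apply intervalIntegral.integral_nonneg zero_le_one
  intro t _
  apply integral_nonneg
  intro u
  exact div_nonneg (sq_nonneg _) (hppos u).le
end
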